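/- arXiv:1302.2279 — 3 statements merged into one kernel-verified Lean document; each statement's English description precedes it below -/
import Mathlib

section
/- In team semantics, the dependence atom =(t₁,…,tₙ) is logically equivalent to the formula (=(t₁) ∧ … ∧ =(t_{n-1})) → =(tₙ): for every model M and team X, M ⊨_X =(t₁,…,tₙ) iff for every subteam Y ⊆ X on which each tᵢ (i < n) is constant, tₙ is constant on Y. -/
/-- The dependence atom `=(t₁,…,tₙ)` is logically equivalent to
`(=(t₁) ∧ … ∧ =(t_{n-1})) → =(tₙ)`: for every model and team `X`,
the dependence atom holds on `X` iff on every subteam `Y ⊆ X` on which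
each `tᵢ` (`i < n`) is constant, `tₙ` is constant.  Terms are given
semantically as functions on assignments. -/
theorem dep_eq_imp_constancy {V M : Type*}
    (ts : List ((V → M) → M)) (t : (V → M) → M) (X : Set (V → M)) :
    (∀ s ∈ X, ∀ s' ∈ X, (∀ u ∈ ts, u s = u s') → t s = t s') ↔
      ∀ Y ⊆ X, (∀ u ∈ ts, ∀ s ∈ Y, ∀ s' ∈ Y, u s = u s') →
        (∀ s ∈ Y, ∀ s' ∈ Y, t s = t s') := by
  constructor
  · intro h Y hY hconst s hs s' hs'
    exact h s (hY hs) s' (hY hs') (fun u hu => hconst u hu s hs s' hs')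
  · intro h s hs s' hs' hagree
    exact h {s, s'} (by intro x hx; rcases hx with rfl | rfl <;> assumption)
      (fun u hu x hx y hy => by
        rcases hx with rfl | rfl <;> rcases hy with rfl | rfl <;>
          first | rfl | exact hagree u hu | exact (hagree u hu).symm)
      s (by simp) s' (by simp)
end

section
/- Let φ(fx₁…x_q, fy₁…y_q) be a first-order formula in which a q-ary function symbol f occurs in the two forms fx₁…x_q and fy₁…y_q with {x₁,…,x_q} ∩ {y₁,…,y_q} = ∅. Then ∀x̄∀ȳ φ(fx̄, fȳ) is equivalent (in second-order semantics) to ∃g∀x̄∀ȳ(φ(fx̄, gȳ) ∧ ((x₁=y₁ ∧ … ∧ x_q=y_q) → fx̄ = gȳ)), where φ(fx̄, gȳ) replaces every occurrence of fy₁…y_q by gy₁…y_q for a fresh function symbol g. -/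
/-- Unifying the arguments of a function symbol.  Let `φ(fx̄, fȳ)` be a
first-order formula in which the `q`-ary function symbol `f` occurs only
in the two forms `f x₁ … x_q` and `f y₁ … y_q`, with `x̄` and `ȳ`
pairwise distinct disjoint variable tuples; semantically, `Φ s m₁ m₂` is
the truth value of `φ` at assignment `s` when the occurrences `f x̄` get
value `m₁` and the occurrences `f ȳ` get value `m₂`, and `F` interprets
`f`.  Then `∀x̄∀ȳ φ(fx̄, fȳ)` is equivalent (in second-order semantics,
with `g` a fresh function variable) to
`∃g ∀x̄∀ȳ (φ(fx̄, gȳ) ∧ ((x₁=y₁ ∧ … ∧ x_q=y_q) → fx̄ = gȳ))`. -/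
theorem unify_function_arguments {V M : Type*} [Nonempty M] {q : ℕ}
    (x y : Fin q → V) (hx : Function.Injective x) (hy : Function.Injective y)
    (hxy : ∀ i j, x i ≠ y j)
    (F : (Fin q → M) → M) (Φ : (V → M) → M → M → Prop) :
    (∀ s : V → M, Φ s (F fun i => s (x i)) (F fun i => s (y i))) ↔
      ∃ G : (Fin q → M) → M, ∀ s : V → M,
        Φ s (F fun i => s (x i)) (G fun i => s (y i)) ∧
        ((∀ i, s (x i) = s (y i)) →
          F (fun i => s (x i)) = G (fun i => s (y i))) := by
  constructor
  · intro h
    exact ⟨F, fun s => ⟨h s, fun hs => by simp [funext hs]⟩⟩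
  · rintro ⟨G, hG⟩ s
    classical
    -- first show G agrees with F on the tuple (fun i => s (y i))
    set s' : V → M := fun v => if h : ∃ i, x i = v then s (y h.choose) else s v with hs'
    have hsx : ∀ i, s' (x i) = s (y i) := by
      intro i
      have h : ∃ j, x j = x i := ⟨i, rfl⟩
      have : h.choose = i := hx h.choose_spec
      simp [hs', dif_pos h, this]
    have hsy : ∀ i, s' (y i) = s (y i) := by
      intro i
      have h : ¬ ∃ j, x j = y i := by rintro ⟨j, hj⟩; exact hxy j i hj
      simp [hs', dif_neg h]
    have hEq : F (fun i => s (y i)) = G (fun i => s (y i)) := by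
      have := (hG s').2 (fun i => (hsx i).trans (hsy i).symm)
      simpa [funext hsx, funext hsy] using this
    have := (hG s).1
    rwa [← hEq] at this
end

section
/- Intuitionistic disjunction is uniformly definable in ID without ⋎ when the model has at least two elements: for ID formulas φ, ψ and any model M with |M| ≥ 2 and team X, M ⊨_X φ ⋎ ψ iff M ⊨_X ∃w∃u(=(w) ∧ =(u) ∧ ((w=u) → φ) ∧ ((w=u → ⊥) → ψ)). -/
/-- The supplement team `X(F/v) = {s(F(s)/v) : s ∈ X}`. -/
def supplement {V M : Type*} [DecidableEq V] (X : Set (V → M)) (F : (V → M) → M) (v : V) :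
    Set (V → M) :=
  (fun s => Function.update s v (F s)) '' X

/-- Restriction of an assignment to the variables other than `w` and `u`. -/
def proj {V M : Type*} [DecidableEq V] (w u : V) (s : V → M) :
    {v : V // v ≠ w ∧ v ≠ u} → M :=
  fun v => s v.1

lemma mem_supp2 {V M : Type*} [DecidableEq V] (X : Set (V → M)) (F G : (V → M) → M) (w u : V)
    {s : V → M} :
    s ∈ supplement (supplement X F w) G u ↔
      ∃ t ∈ X, s = Function.update (Function.update t w (F t)) u
        (G (Function.update t w (F t))) := by
  unfold supplement
  rw [Set.image_image]
  constructor
  · rintro ⟨t, ht, rfl⟩; exact ⟨t, ht, rfl⟩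
  · rintro ⟨t, ht, rfl⟩; exact ⟨t, ht, rfl⟩

lemma proj_upd {V M : Type*} [DecidableEq V] (w u : V) (s : V → M) (c d : M) :
    proj w u (Function.update (Function.update s w c) u d) = proj w u s := by
  funext v
  simp only [proj, Function.update_of_ne v.2.2, Function.update_of_ne v.2.1]

lemma proj_supp2 {V M : Type*} [DecidableEq V] (X : Set (V → M)) (F G : (V → M) → M) (w u : V) :
    proj w u '' (supplement (supplement X F w) G u) = proj w u '' X := by
  unfold supplement
  rw [Set.image_image, Set.image_image]
  exact Set.image_congr fun t _ => proj_upd w u t _ _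

lemma upd2_w {V M : Type*} [DecidableEq V] {w u : V} (hwu : w ≠ u) (t : V → M) (c d : M) :
    Function.update (Function.update t w c) u d w = c := by
  rw [Function.update_of_ne hwu, Function.update_self]

lemma upd2_u {V M : Type*} [DecidableEq V] (w u : V) (t : V → M) (c d : M) :
    Function.update (Function.update t w c) u d u = d := by
  rw [Function.update_self]

/-- Intuitionistic disjunction is uniformly definable in ID without `⋎`
when the model has at least two elements.  Let `P`, `Q` be the satisfaction
relations of ID formulas `φ`, `ψ` (downwards closed, with the empty team
property, and not depending on the fresh variables `w ≠ u`).  Then for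
every team `X`:  `M ⊨_X φ ⋎ ψ` iff
`M ⊨_X ∃w∃u(=(w) ∧ =(u) ∧ ((w=u) → φ) ∧ ((w=u → ⊥) → ψ))`. -/
theorem idisj_definable {V M : Type*} [DecidableEq V] (w u : V) (hwu : w ≠ u)
    (a b : M) (hab : a ≠ b)
    (P Q : Set (V → M) → Prop)
    (hdcP : ∀ X Y : Set (V → M), Y ⊆ X → P X → P Y)
    (hdcQ : ∀ X Y : Set (V → M), Y ⊆ X → Q X → Q Y)
    (hempP : P ∅) (hempQ : Q ∅)
    (hfreshP : ∀ X Y : Set (V → M), proj w u '' X = proj w u '' Y → (P X ↔ P Y))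
    (hfreshQ : ∀ X Y : Set (V → M), proj w u '' X = proj w u '' Y → (Q X ↔ Q Y))
    (X : Set (V → M)) :
    (P X ∨ Q X) ↔
      ∃ F G : (V → M) → M,
        (∀ s ∈ supplement (supplement X F w) G u,
          ∀ s' ∈ supplement (supplement X F w) G u, s w = s' w) ∧
        (∀ s ∈ supplement (supplement X F w) G u,
          ∀ s' ∈ supplement (supplement X F w) G u, s u = s' u) ∧
        (∀ Y ⊆ supplement (supplement X F w) G u,
          (∀ s ∈ Y, s w = s u) → P Y) ∧
        (∀ Y ⊆ supplement (supplement X F w) G u,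
          (∀ Z ⊆ Y, (∀ s ∈ Z, s w = s u) → Z = ∅) → Q Y) := by
  constructor
  · rintro (hP | hQ)
    · refine ⟨fun _ => a, fun _ => a, ?_, ?_, ?_, ?_⟩
      · intro s hs s' hs'
        obtain ⟨t, _, rfl⟩ := (mem_supp2 X _ _ w u).mp hs
        obtain ⟨t', _, rfl⟩ := (mem_supp2 X _ _ w u).mp hs'
        rw [upd2_w hwu, upd2_w hwu]
      · intro s hs s' hs'
        obtain ⟨t, _, rfl⟩ := (mem_supp2 X _ _ w u).mp hs
        obtain ⟨t', _, rfl⟩ := (mem_supp2 X _ _ w u).mp hs'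
        rw [upd2_u, upd2_u]
      · intro Y hY _
        exact hdcP _ _ hY ((hfreshP _ X (proj_supp2 X _ _ w u)).mpr hP)
      · intro Y hY h
        have : Y = ∅ := by
          apply h Y (subset_refl Y)
          intro s hs
          obtain ⟨t, _, rfl⟩ := (mem_supp2 X _ _ w u).mp (hY hs)
          rw [upd2_w hwu, upd2_u]
        rw [this]; exact hempQ
    · refine ⟨fun _ => a, fun _ => b, ?_, ?_, ?_, ?_⟩
      · intro s hs s' hs'
        obtain ⟨t, _, rfl⟩ := (mem_supp2 X _ _ w u).mp hs
        obtain ⟨t', _, rfl⟩ := (mem_supp2 X _ _ w u).mp hs'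
        rw [upd2_w hwu, upd2_w hwu]
      · intro s hs s' hs'
        obtain ⟨t, _, rfl⟩ := (mem_supp2 X _ _ w u).mp hs
        obtain ⟨t', _, rfl⟩ := (mem_supp2 X _ _ w u).mp hs'
        rw [upd2_u, upd2_u]
      · intro Y hY h
        have : Y = ∅ := by
          rw [Set.eq_empty_iff_forall_notMem]
          intro s hs
          have heq := h s hs
          obtain ⟨t, _, rfl⟩ := (mem_supp2 X _ _ w u).mp (hY hs)
          rw [upd2_w hwu, upd2_u] at heq
          exact hab heq
        rw [this]; exact hempP
      · intro Y hY _
        exact hdcQ _ _ hY ((hfreshQ _ X (proj_supp2 X _ _ w u)).mpr hQ)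
  · rintro ⟨F, G, hcw, hcu, h3, h4⟩
    rcases X.eq_empty_or_nonempty with rfl | ⟨t₀, ht₀⟩
    · exact Or.inl hempP
    · set s₀ := Function.update (Function.update t₀ w (F t₀)) u
        (G (Function.update t₀ w (F t₀))) with hs₀def
      have hs₀ : s₀ ∈ supplement (supplement X F w) G u :=
        (mem_supp2 X F G w u).mpr ⟨t₀, ht₀, rfl⟩
      by_cases h : s₀ w = s₀ u
      · left
        have hPT : P (supplement (supplement X F w) G u) := by
          apply h3 _ (subset_refl _)
          intro s hs
          rw [hcw s hs s₀ hs₀, h, ← hcu s hs s₀ hs₀]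
        exact (hfreshP X _ (proj_supp2 X F G w u).symm).mpr hPT
      · right
        have hQT : Q (supplement (supplement X F w) G u) := by
          apply h4 _ (subset_refl _)
          intro Z hZ hZeq
          rw [Set.eq_empty_iff_forall_notMem]
          intro s hs
          exact h (by rw [hcw s₀ hs₀ s (hZ hs), hZeq s hs, ← hcu s₀ hs₀ s (hZ hs)])
        exact (hfreshQ X _ (proj_supp2 X F G w u).symm).mpr hQT
end
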